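/- Let σ₁,…,σ_m be independent Rademacher random variables and x₁,…,x_m ∈ ℝ^d. For the class H = {x ↦ ⟨w, x⟩ : ‖w‖₂ ≤ W} and the robustly perturbed class H̃ = {(x,y) ↦ min_{‖x'−x‖_p ≤ ε} y⟨w, x'⟩ : ‖w‖₂ ≤ W}, the empirical Rademacher complexity satisfies Rad(H̃) ≤ Rad(H) + (εW / (2√m)) · max(d^{1/p* − 1/2}, 1). -/

import Mathlib

/-!
For `|y| = 1` and `ε ≥ 0`, Hölder's inequality and its equality case give
`min_{‖x' - x‖_p ≤ ε} y⟨w, x'⟩ = y⟨w, x⟩ - ε‖w‖_q`. Hence, for a sign vector `σ`, the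
adversarial correlation of `w` is its standard correlation with the signs `σᵢyᵢ` minus
`ε‖w‖_q (∑ σᵢ)/m`. Multiplying the signs by the pattern `y` permutes the cube, so the first part
averages to the standard Rademacher complexity. The second is at most
`εW max(d^{1/q-1/2}, 1) (∑ σᵢ)⁻/m`, and the symmetry `σ ↦ -σ` gives
`E (∑ σᵢ)⁻ = E |∑ σᵢ| / 2 ≤ √(E (∑ σᵢ)²) / 2 = √m / 2`.
-/

noncomputable def lpNorm {d : ℕ} (p : ℝ) (w : Fin d → ℝ) : ℝ :=
  (∑ j, |w j| ^ p) ^ (1 / p)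

def dotp {d : ℕ} (w x : Fin d → ℝ) : ℝ := ∑ j, w j * x j

/-- A Rademacher sign from a Boolean. -/
def rsign (b : Bool) : ℝ := if b then 1 else -1

open Finset Matrix

section LpNorm

variable {d : ℕ} {p q r s : ℝ}

lemma dotp_eq_dotProduct (w x : Fin d → ℝ) : dotp w x = w ⬝ᵥ x := rfl

lemma lpNorm_nonneg (p : ℝ) (w : Fin d → ℝ) : 0 ≤ lpNorm p w := by
  unfold lpNorm
  positivity

lemma lpNorm_zero (hp : p ≠ 0) : lpNorm p (0 : Fin d → ℝ) = 0 := by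
  simp [lpNorm, Real.zero_rpow hp, Real.zero_rpow (inv_ne_zero hp)]

lemma lpNorm_neg (w : Fin d → ℝ) : lpNorm p (-w) = lpNorm p w := by
  simp [lpNorm]

lemma lpNorm_smul (hp : 0 < p) (a : ℝ) (w : Fin d → ℝ) :
    lpNorm p (a • w) = |a| * lpNorm p w := by
  simp only [lpNorm, Pi.smul_apply, smul_eq_mul, abs_mul,
    Real.mul_rpow (abs_nonneg a) (abs_nonneg _), ← mul_sum]
  rw [Real.mul_rpow (by positivity) (by positivity), ← Real.rpow_mul (abs_nonneg a),
    mul_one_div_cancel hp.ne', Real.rpow_one]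

lemma lpNorm_rpow (hp : p ≠ 0) (w : Fin d → ℝ) : lpNorm p w ^ p = ∑ j, |w j| ^ p := by
  rw [lpNorm, one_div, Real.rpow_inv_rpow (by positivity) hp]

lemma abs_le_lpNorm (hp : 0 < p) (w : Fin d → ℝ) (j : Fin d) : |w j| ≤ lpNorm p w := by
  rw [← Real.rpow_le_rpow_iff (abs_nonneg _) (lpNorm_nonneg p w) hp, lpNorm_rpow hp.ne']
  exact single_le_sum (f := fun i => |w i| ^ p) (fun i _ => by positivity) (mem_univ j)

lemma dotp_le_lpNorm_mul_lpNorm (hpq : p.HolderConjugate q) (w x : Fin d → ℝ) :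
    dotp w x ≤ lpNorm p w * lpNorm q x :=
  Real.inner_le_Lp_mul_Lq _ _ _ hpq

lemma abs_dotp_le_lpNorm_mul_lpNorm (hpq : p.HolderConjugate q) (w x : Fin d → ℝ) :
    |dotp w x| ≤ lpNorm p w * lpNorm q x := by
  refine abs_le.2 ⟨?_, dotp_le_lpNorm_mul_lpNorm hpq w x⟩
  have := dotp_le_lpNorm_mul_lpNorm hpq (-w) x
  rw [lpNorm_neg, dotp_eq_dotProduct, neg_dotProduct] at this
  exact neg_le.1 this

lemma exists_dotp_eq_lpNorm_rpow (hpq : p.HolderConjugate q) (w : Fin d → ℝ) :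
    ∃ v : Fin d → ℝ, lpNorm p v = lpNorm q w ^ (q - 1) ∧ dotp w v = lpNorm q w ^ q := by
  have hq := hpq.symm
  refine ⟨fun j => w j * |w j| ^ (q - 2), ?_, ?_⟩
  · have habs : ∀ j, |w j * |w j| ^ (q - 2)| ^ p = |w j| ^ q := fun j => by
      rw [abs_mul, Real.abs_rpow_of_nonneg (abs_nonneg _), abs_abs,
        ← Real.rpow_one_add' (abs_nonneg _) (by linarith [hq.sub_one_pos]),
        ← Real.rpow_mul (abs_nonneg _)]
      congr 1
      linarith [hq.sub_one_mul_conj]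
    rw [lpNorm, Fintype.sum_congr _ _ habs, ← lpNorm_rpow hq.ne_zero, ← Real.rpow_mul
      (lpNorm_nonneg q w), mul_one_div, hq.div_conj_eq_sub_one]
  · have hterm : ∀ j, w j * (w j * |w j| ^ (q - 2)) = |w j| ^ q := fun j => by
      rw [← mul_assoc, ← abs_mul_abs_self, mul_assoc,
        ← Real.rpow_one_add' (abs_nonneg _) (by linarith [hq.sub_one_pos]),
        ← Real.rpow_one_add' (abs_nonneg _) (by linarith [hq.pos])]
      ring_nf
    rw [dotp, Fintype.sum_congr _ _ hterm, lpNorm_rpow hq.ne_zero]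

lemma exists_lpNorm_le_one_dotp_eq (hpq : p.HolderConjugate q) (w : Fin d → ℝ) :
    ∃ v : Fin d → ℝ, lpNorm p v ≤ 1 ∧ dotp w v = lpNorm q w := by
  obtain ⟨v, hv, hwv⟩ := exists_dotp_eq_lpNorm_rpow hpq w
  rcases (lpNorm_nonneg q w).eq_or_lt with hw | hw
  · exact ⟨0, by simp [lpNorm_zero hpq.ne_zero], by simp [dotp, ← hw]⟩
  refine ⟨(lpNorm q w ^ (q - 1))⁻¹ • v, ?_, ?_⟩
  · rw [lpNorm_smul hpq.pos, hv, abs_of_pos (by positivity), inv_mul_cancel₀ (by positivity)]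
  · rw [dotp_eq_dotProduct, dotProduct_smul, ← dotp_eq_dotProduct, hwv, smul_eq_mul,
      ← Real.rpow_neg hw.le, ← Real.rpow_add hw]
    norm_num

lemma isLeast_dotp_lpBall (hpq : p.HolderConjugate q) {ε : ℝ} (hε : 0 ≤ ε)
    (w x : Fin d → ℝ) :
    IsLeast {u | ∃ x', lpNorm p (x' - x) ≤ ε ∧ u = dotp w x'}
      (dotp w x - ε * lpNorm q w) := by
  constructor
  · obtain ⟨v, hv, hwv⟩ := exists_lpNorm_le_one_dotp_eq hpq w
    refine ⟨x - ε • v, ?_, ?_⟩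
    · rw [sub_sub_cancel_left, lpNorm_neg, lpNorm_smul hpq.pos, abs_of_nonneg hε]
      exact mul_le_of_le_one_right hε hv
    · rw [← hwv]
      simp only [dotp_eq_dotProduct, dotProduct_sub, dotProduct_smul, smul_eq_mul]
  · rintro _ ⟨x', hx', rfl⟩
    have holder := neg_le_of_abs_le (abs_dotp_le_lpNorm_mul_lpNorm hpq.symm w (x' - x))
    have in_ball := mul_le_mul_of_nonneg_left hx' (lpNorm_nonneg q w)
    simp only [dotp_eq_dotProduct, dotProduct_sub] at holder ⊢
    linarith

lemma sInf_mul_dotp_lpBall (hpq : p.HolderConjugate q) {ε : ℝ} (hε : 0 ≤ ε) (y : ℝ)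
    (w x : Fin d → ℝ) :
    sInf {u | ∃ x', lpNorm p (x' - x) ≤ ε ∧ u = y * dotp w x'}
      = y * dotp w x - ε * (|y| * lpNorm q w) := by
  have hsmul : ∀ x', y * dotp w x' = dotp (y • w) x' := fun x' => by
    rw [dotp_eq_dotProduct, dotp_eq_dotProduct, smul_dotProduct, smul_eq_mul]
  simp only [hsmul]
  rw [(isLeast_dotp_lpBall hpq hε (y • w) x).csInf_eq, lpNorm_smul hpq.symm.pos]

lemma lpNorm_le_lpNorm_of_exponent_le (hr : 0 < r) (hrs : r ≤ s) (w : Fin d → ℝ) :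
    lpNorm s w ≤ lpNorm r w := by
  have hs : 0 < s := hr.trans_le hrs
  have split : ∀ a : ℝ, 0 ≤ a → a ^ s = a ^ r * a ^ (s - r) := fun a ha => by
    rw [← Real.rpow_add' ha (by simpa using hs.ne'), add_sub_cancel]
  set N := lpNorm r w
  rw [← Real.rpow_le_rpow_iff (lpNorm_nonneg s w) (lpNorm_nonneg r w) hs, lpNorm_rpow hs.ne']
  calc ∑ j, |w j| ^ s = ∑ j, |w j| ^ r * |w j| ^ (s - r) :=
        Fintype.sum_congr _ _ fun j => split _ (abs_nonneg _)
    _ ≤ ∑ j, |w j| ^ r * N ^ (s - r) := by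
        gcongr with j
        exact abs_le_lpNorm hr w j
    _ = N ^ s := by rw [← sum_mul, ← lpNorm_rpow hr.ne', split N (lpNorm_nonneg r w)]

lemma lpNorm_le_card_rpow_mul_lpNorm (hr : 0 < r) (hrs : r ≤ s) (w : Fin d → ℝ) :
    lpNorm r w ≤ (d : ℝ) ^ (1 / r - 1 / s) * lpNorm s w := by
  have hs : 0 < s := hr.trans_le hrs
  have power_mean := Real.rpow_sum_le_const_mul_sum_rpow_of_nonneg univ
    ((one_le_div hr).2 hrs) (f := fun j => |w j| ^ r) (fun j _ => by positivity)
  simp only [card_univ, Fintype.card_fin, ← Real.rpow_mul (abs_nonneg _),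
    mul_div_cancel₀ _ hr.ne'] at power_mean
  rw [← Real.rpow_le_rpow_iff (lpNorm_nonneg r w)
    (mul_nonneg (by positivity) (lpNorm_nonneg s w)) hs,
    Real.mul_rpow (by positivity) (lpNorm_nonneg s w), ← Real.rpow_mul (Nat.cast_nonneg d),
    lpNorm_rpow hs.ne', ← mul_div_cancel₀ s hr.ne', Real.rpow_mul (lpNorm_nonneg r w),
    lpNorm_rpow hr.ne', mul_div_cancel₀ s hr.ne']
  convert power_mean using 3
  field_simp

lemma lpNorm_le_max_mul_lpNorm_two (hq : 0 < q) (w : Fin d → ℝ) :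
    lpNorm q w ≤ max ((d : ℝ) ^ (1 / q - 1 / 2)) 1 * lpNorm 2 w := by
  rcases le_total q 2 with hq2 | hq2
  · exact (lpNorm_le_card_rpow_mul_lpNorm hq hq2 w).trans
      (mul_le_mul_of_nonneg_right (le_max_left _ _) (lpNorm_nonneg 2 w))
  · exact (lpNorm_le_lpNorm_of_exponent_le two_pos hq2 w).trans
      (le_mul_of_one_le_left (lpNorm_nonneg 2 w) (le_max_right _ _))

end LpNorm

section Rademacher

variable {ι : Type*} [Fintype ι] [DecidableEq ι]

@[simp] lemma rsign_true : rsign true = 1 := rfl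

@[simp] lemma rsign_false : rsign false = -1 := rfl

lemma rsign_mul_self (b : Bool) : rsign b * rsign b = 1 := by
  cases b <;> norm_num

lemma rsign_beq (a b : Bool) : rsign (a == b) = rsign a * rsign b := by
  cases a <;> cases b <;> norm_num [rsign]

lemma sum_comp_beq {M : Type*} [AddCommMonoid M] (c : ι → Bool) (f : (ι → Bool) → M) :
    ∑ s : ι → Bool, f (fun i => c i == s i) = ∑ s, f s :=
  Equiv.sum_comp (Function.Involutive.toPerm (fun (s : ι → Bool) i => c i == s i) fun s => by
    funext i; dsimp only; cases c i <;> cases s i <;> rfl) f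

lemma sum_rsign_mul_rsign_of_ne {i j : ι} (hij : i ≠ j) :
    ∑ s : ι → Bool, rsign (s i) * rsign (s j) = 0 := by
  have flip_i := sum_comp_beq (Function.update (fun _ => true) i false)
    fun s => rsign (s i) * rsign (s j)
  simp only [rsign_beq, Function.update_self, Function.update_of_ne hij.symm, rsign_false,
    rsign_true, one_mul, neg_mul, sum_neg_distrib] at flip_i
  linarith

lemma sum_sq_sum_rsign :
    ∑ s : ι → Bool, (∑ i, rsign (s i)) ^ 2 = 2 ^ Fintype.card ι * Fintype.card ι := by
  calc ∑ s : ι → Bool, (∑ i, rsign (s i)) ^ 2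
      = ∑ i, ∑ j, ∑ s : ι → Bool, rsign (s i) * rsign (s j) := by
        simp_rw [sq, sum_mul_sum]
        rw [sum_comm]
        exact sum_congr rfl fun i _ => sum_comm
    _ = ∑ i : ι, ∑ j : ι, if i = j then (2 : ℝ) ^ Fintype.card ι else 0 := by
        refine Fintype.sum_congr _ _ fun i => Fintype.sum_congr _ _ fun j => ?_
        split_ifs with hij
        · simp [hij, rsign_mul_self]
        · exact sum_rsign_mul_rsign_of_ne hij
    _ = 2 ^ Fintype.card ι * Fintype.card ι := by simp [mul_comm]

lemma sum_abs_sum_rsign_le :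
    ∑ s : ι → Bool, |∑ i, rsign (s i)| ≤ 2 ^ Fintype.card ι * √(Fintype.card ι) := by
  have cauchy_schwarz := sq_sum_le_card_mul_sum_sq (s := univ)
    (f := fun s : ι → Bool => |∑ i, rsign (s i)|)
  simp only [sq_abs, sum_sq_sum_rsign, card_univ, Fintype.card_fun, Fintype.card_bool]
    at cauchy_schwarz
  rw [← pow_le_pow_iff_left₀ (sum_nonneg fun _ _ => abs_nonneg _) (by positivity) two_ne_zero,
    mul_pow, Real.sq_sqrt (Nat.cast_nonneg _)]
  convert cauchy_schwarz using 1
  push_cast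
  ring

lemma sum_max_neg_sum_rsign_le :
    ∑ s : ι → Bool, max (-∑ i, rsign (s i)) 0
      ≤ 2 ^ Fintype.card ι * √(Fintype.card ι) / 2 := by
  have flip := sum_comp_beq (fun _ => false) fun s : ι → Bool => max (-∑ i, rsign (s i)) 0
  simp only [rsign_beq, rsign_false, neg_one_mul, sum_neg_distrib, neg_neg] at flip
  have split : ∑ s : ι → Bool, |∑ i, rsign (s i)|
      = ∑ s : ι → Bool, max (∑ i, rsign (s i)) 0
        + ∑ s : ι → Bool, max (-∑ i, rsign (s i)) 0 := by
    rw [← sum_add_distrib]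
    simp only [max_zero_add_max_neg_zero_eq_abs_self]
  linarith [sum_abs_sum_rsign_le (ι := ι)]

end Rademacher

lemma sSup_le_sSup_add {α : Type*} {P : α → Prop} {f g : α → ℝ} {C : ℝ} (hP : ∃ a, P a)
    (hg : BddAbove {v | ∃ a, P a ∧ v = g a}) (hfg : ∀ a, P a → f a ≤ g a + C) :
    sSup {v | ∃ a, P a ∧ v = f a} ≤ sSup {v | ∃ a, P a ∧ v = g a} + C := by
  obtain ⟨a₀, ha₀⟩ := hP
  refine csSup_le ⟨f a₀, a₀, ha₀, rfl⟩ ?_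
  rintro _ ⟨a, ha, rfl⟩
  exact (hfg a ha).trans (by gcongr; exact le_csSup hg ⟨a, ha, rfl⟩)

section Correlation

variable {m d : ℕ}

noncomputable def linearCorrelationSup (W : ℝ) (xs : Fin m → Fin d → ℝ) (τ : Fin m → ℝ) : ℝ :=
  sSup {v | ∃ w : Fin d → ℝ, lpNorm 2 w ≤ W ∧ v = (1 / (m : ℝ)) * ∑ i, τ i * dotp w (xs i)}

noncomputable def robustCorrelationSup (p ε W : ℝ) (xs : Fin m → Fin d → ℝ)
    (ys σ : Fin m → ℝ) : ℝ :=
  sSup {v | ∃ w : Fin d → ℝ, lpNorm 2 w ≤ W ∧ v = (1 / (m : ℝ)) * ∑ i, σ i *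
    sInf {u | ∃ x' : Fin d → ℝ, lpNorm p (x' - xs i) ≤ ε ∧ u = ys i * dotp w x'}}

lemma bddAbove_weighted_dotp_l2Ball (W c : ℝ) (xs : Fin m → Fin d → ℝ) (τ : Fin m → ℝ) :
    BddAbove {v | ∃ w : Fin d → ℝ, lpNorm 2 w ≤ W ∧ v = c * ∑ i, τ i * dotp w (xs i)} := by
  refine ⟨|c| * ∑ i, |τ i| * (W * lpNorm 2 (xs i)), ?_⟩
  rintro _ ⟨w, hw, rfl⟩
  calc c * ∑ i, τ i * dotp w (xs i) ≤ |c| * ∑ i, |τ i| * |dotp w (xs i)| := by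
        refine (le_abs_self _).trans ?_
        rw [abs_mul]
        gcongr
        exact (abs_sum_le_sum_abs _ _).trans_eq (by simp only [abs_mul])
    _ ≤ |c| * ∑ i, |τ i| * (W * lpNorm 2 (xs i)) := by
        gcongr with i
        exact (abs_dotp_le_lpNorm_mul_lpNorm .two_two w (xs i)).trans
          (mul_le_mul_of_nonneg_right hw (lpNorm_nonneg 2 (xs i)))

lemma robustCorrelationSup_le {p q ε W K : ℝ} (hpq : p.HolderConjugate q) (hε : 0 ≤ ε)
    (hW : 0 ≤ W) (hK : ∀ w : Fin d → ℝ, lpNorm 2 w ≤ W → lpNorm q w ≤ K)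
    (xs : Fin m → Fin d → ℝ) {ys σ τ : Fin m → ℝ} (hy : ∀ i, |ys i| = 1)
    (hτ : ∀ i, τ i = σ i * ys i) :
    robustCorrelationSup p ε W xs ys σ
      ≤ linearCorrelationSup W xs τ + ε * K / m * max (-∑ i, σ i) 0 := by
  refine sSup_le_sSup_add ⟨0, by rwa [lpNorm_zero two_ne_zero]⟩
    (bddAbove_weighted_dotp_l2Ball W _ xs τ) fun w hw => ?_
  simp only [sInf_mul_dotp_lpBall hpq hε, hy, one_mul, hτ]
  have penalty : -(∑ i, σ i) * (ε * lpNorm q w) ≤ max (-∑ i, σ i) 0 * (ε * K) :=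
    mul_le_mul (le_max_left _ _) (mul_le_mul_of_nonneg_left (hK w hw) hε)
      (mul_nonneg hε (lpNorm_nonneg q w)) (le_max_right _ _)
  have expand : ∑ i, σ i * (ys i * dotp w (xs i) - ε * lpNorm q w)
      = ∑ i, σ i * ys i * dotp w (xs i) - (∑ i, σ i) * (ε * lpNorm q w) := by
    rw [sum_mul, ← sum_sub_distrib]
    exact Fintype.sum_congr _ _ fun i => by ring
  rw [expand, mul_sub]
  linear_combination mul_le_mul_of_nonneg_left penalty (by positivity : (0 : ℝ) ≤ 1 / m)

end Correlation

theorem adversarial_rademacher_bound_general {d m : ℕ}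
    (p q : ℝ) (hpq : p.HolderConjugate q)
    (xs : Fin m → Fin d → ℝ) (ys : Fin m → ℝ) (hy : ∀ i, ys i = 1 ∨ ys i = -1)
    (ε : ℝ) (hε : 0 ≤ ε) (W : ℝ) (hW : 0 < W) :
    ((2 : ℝ) ^ m)⁻¹ * ∑ s : Fin m → Bool,
        sSup {v : ℝ | ∃ w : Fin d → ℝ, lpNorm 2 w ≤ W ∧
          v = (1 / (m : ℝ)) * ∑ i, rsign (s i) *
            sInf {u : ℝ | ∃ x' : Fin d → ℝ, lpNorm p (x' - xs i) ≤ ε ∧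
              u = ys i * dotp w x'}}
      ≤
    ((2 : ℝ) ^ m)⁻¹ * (∑ s : Fin m → Bool,
        sSup {v : ℝ | ∃ w : Fin d → ℝ, lpNorm 2 w ≤ W ∧
          v = (1 / (m : ℝ)) * ∑ i, rsign (s i) * dotp w (xs i)})
      + ε * W / (2 * Real.sqrt m) *
          max ((d : ℝ) ^ ((1 : ℝ) / q - 1 / 2)) 1 := by
  obtain ⟨c, hc⟩ : ∃ c : Fin m → Bool, ∀ i, rsign (c i) = ys i :=
    ⟨fun i => decide (ys i = 1), fun i => by rcases hy i with h | h <;> norm_num [h, rsign]⟩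
  have abs_ys : ∀ i, |ys i| = 1 := fun i => by rw [← hc i]; cases c i <;> norm_num
  set M := max ((d : ℝ) ^ ((1 : ℝ) / q - 1 / 2)) 1
  have norm_bound : ∀ w : Fin d → ℝ, lpNorm 2 w ≤ W → lpNorm q w ≤ M * W := fun w hw =>
    (lpNorm_le_max_mul_lpNorm_two hpq.symm.pos w).trans (by gcongr)
  let rad (s : Fin m → Bool) : ℝ := linearCorrelationSup W xs fun i => rsign (s i)
  let neg (s : Fin m → Bool) : ℝ := max (-∑ i, rsign (s i)) 0
  show ((2 : ℝ) ^ m)⁻¹ * ∑ s : Fin m → Bool,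
      robustCorrelationSup p ε W xs ys (fun i => rsign (s i))
    ≤ (2 ^ m)⁻¹ * ∑ s, rad s + ε * W / (2 * √m) * M
  calc _ ≤ (2 ^ m)⁻¹ * ∑ s, (rad (fun i => c i == s i) + ε * (M * W) / m * neg s) := by
        gcongr with s
        exact robustCorrelationSup_le hpq hε hW.le norm_bound xs abs_ys fun i => by
          rw [rsign_beq, hc, mul_comm]
    _ = (2 ^ m)⁻¹ * ∑ s, rad s + (2 ^ m)⁻¹ * (ε * (M * W) / m) * ∑ s, neg s := by
        rw [sum_add_distrib, sum_comp_beq c rad, ← mul_sum]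
        ring
    _ ≤ (2 ^ m)⁻¹ * ∑ s, rad s + (2 ^ m)⁻¹ * (ε * (M * W) / m) * (2 ^ m * √m / 2) := by
        gcongr
        simpa using sum_max_neg_sum_rsign_le (ι := Fin m)
    _ = _ := by
        rw [show (2 ^ m : ℝ)⁻¹ * (ε * (M * W) / m) * (2 ^ m * √m / 2)
          = ε * W / 2 * M * (√m / m) by field_simp, Real.sqrt_div_self']
        ring

/-- The adversarial Rademacher complexity of the `ℓ₂`-bounded linear class is at
most the standard one plus `(εW/(2√m))·max(d^{1/p*−1/2}, 1)`. -/
theorem adversarial_rademacher_bound {d m : ℕ} (hm : 0 < m)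
    (p q : ℝ) (hpq : p.HolderConjugate q)
    (xs : Fin m → Fin d → ℝ) (ys : Fin m → ℝ) (hy : ∀ i, ys i = 1 ∨ ys i = -1)
    (ε : ℝ) (hε : 0 ≤ ε) (W : ℝ) (hW : 0 < W) :
    ((2 : ℝ) ^ m)⁻¹ * ∑ s : Fin m → Bool,
        sSup {v : ℝ | ∃ w : Fin d → ℝ, lpNorm 2 w ≤ W ∧
          v = (1 / (m : ℝ)) * ∑ i, rsign (s i) *
            sInf {u : ℝ | ∃ x' : Fin d → ℝ, lpNorm p (x' - xs i) ≤ ε ∧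
              u = ys i * dotp w x'}}
      ≤
    ((2 : ℝ) ^ m)⁻¹ * (∑ s : Fin m → Bool,
        sSup {v : ℝ | ∃ w : Fin d → ℝ, lpNorm 2 w ≤ W ∧
          v = (1 / (m : ℝ)) * ∑ i, rsign (s i) * dotp w (xs i)})
      + ε * W / (2 * Real.sqrt m) *
          max ((d : ℝ) ^ ((1 : ℝ) / q - 1 / 2)) 1 :=
  adversarial_rademacher_bound_general p q hpq xs ys hy ε hε W hW
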